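/- Let P ⊆ ℝ^q be a convex polyhedron with V-representation P = conv V + cone D where V, D are finite sets, and let C ⊆ ℝ^q be a convex cone with 0⁺P ⊇ C (equivalently P + C = P). Then P = conv V + cone(D \ C) + C. -/
import Mathlib

open Set Matrix Pointwise RealInnerProductSpace

def IsPolyhedron {E : Type*} [AddCommGroup E] [Module ℝ E] (P : Set E) : Prop :=
  ∃ (m : ℕ) (f : Fin m → (E →ₗ[ℝ] ℝ)) (b : Fin m → ℝ), P = {x | ∀ i, f i x ≤ b i}

def graphOf {α β : Type*} (F : α → Set β) : Set (α × β) := {p | p.2 ∈ F p.1}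

def recc {E : Type*} [AddCommGroup E] [Module ℝ E] (P : Set E) : Set E :=
  {d | ∀ p ∈ P, p + d ∈ P}

def IsConvexCone {E : Type*} [AddCommGroup E] [Module ℝ E] (C : Set E) : Prop :=
  Convex ℝ C ∧ ∀ c ∈ C, ∀ r : ℝ, 0 ≤ r → r • c ∈ C

def coneHull {E : Type*} [AddCommGroup E] [Module ℝ E] (D : Set E) : Set E :=
  {y | ∃ (k : ℕ) (c : Fin k → ℝ) (d : Fin k → E),
    (∀ i, 0 ≤ c i) ∧ (∀ i, d i ∈ D) ∧ y = ∑ i, c i • d i}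

lemma coneHull_zero {E : Type*} [AddCommGroup E] [Module ℝ E] (D : Set E) :
    (0 : E) ∈ coneHull D := ⟨0, ![], ![], by simp, by simp, by simp⟩

lemma coneHull_mono {E : Type*} [AddCommGroup E] [Module ℝ E] {A B : Set E} (h : A ⊆ B) :
    coneHull A ⊆ coneHull B := by
  rintro x ⟨k, c, d, hc, hd, rfl⟩
  exact ⟨k, c, d, hc, fun i => h (hd i), rfl⟩

lemma coneHull_add {E : Type*} [AddCommGroup E] [Module ℝ E] {D : Set E} {x y : E}
    (hx : x ∈ coneHull D) (hy : y ∈ coneHull D) : x + y ∈ coneHull D := by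
  obtain ⟨k, c, d, hc, hd, rfl⟩ := hx
  obtain ⟨l, c', d', hc', hd', rfl⟩ := hy
  refine ⟨k + l, Fin.append c c', Fin.append d d', ?_, ?_, ?_⟩
  · intro i
    refine Fin.addCases (fun j => ?_) (fun j => ?_) i <;> simp [hc, hc']
  · intro i
    refine Fin.addCases (fun j => ?_) (fun j => ?_) i <;> simp [hd, hd']
  · rw [Fin.sum_univ_add]
    simp

lemma convexCone_add {E : Type*} [AddCommGroup E] [Module ℝ E] {C : Set E}
    (hC : IsConvexCone C) {x y : E} (hx : x ∈ C) (hy : y ∈ C) : x + y ∈ C := by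
  have h := hC.1 hx hy (by norm_num : (0:ℝ) ≤ 1/2) (by norm_num : (0:ℝ) ≤ 1/2) (by norm_num)
  have := hC.2 _ h 2 (by norm_num)
  convert this using 1
  rw [smul_add, smul_smul, smul_smul]
  norm_num

theorem stmt11 {q : ℕ} (P : Set (Fin q → ℝ)) (V D : Finset (Fin q → ℝ))
    (C : Set (Fin q → ℝ)) (hV : V.Nonempty)
    (hP : P = convexHull ℝ (V : Set (Fin q → ℝ)) + coneHull (D : Set (Fin q → ℝ)))
    (hCc : IsConvexCone C) (hC0 : (0 : Fin q → ℝ) ∈ C) (hCrec : C ⊆ recc P) :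
    P = convexHull ℝ (V : Set (Fin q → ℝ)) + coneHull ((D : Set (Fin q → ℝ)) \ C) + C := by
  apply le_antisymm
  · -- P ⊆ RHS
    rintro x hx
    rw [hP] at hx
    obtain ⟨v, hv, y, hy, rfl⟩ := hx
    obtain ⟨k, c, d, hc, hd, rfl⟩ := hy
    classical
    rw [← Finset.sum_filter_add_sum_filter_not Finset.univ (fun i => ¬ d i ∈ C)
      (fun i => c i • d i)]
    have h1 : ∑ i ∈ Finset.univ.filter (fun i => ¬ ¬ d i ∈ C), c i • d i ∈ C := by
      apply Finset.sum_induction _ (· ∈ C) (fun a b => convexCone_add hCc) hC0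
      intro i hi
      exact hCc.2 _ (not_not.mp (Finset.mem_filter.mp hi).2) _ (hc i)
    have h2 : ∑ i ∈ Finset.univ.filter (fun i => ¬ d i ∈ C), c i • d i ∈
        coneHull ((D : Set (Fin q → ℝ)) \ C) := by
      apply Finset.sum_induction _ (· ∈ coneHull ((D : Set (Fin q → ℝ)) \ C))
        (fun a b => coneHull_add) (coneHull_zero _)
      intro i hi
      exact ⟨1, ![c i], ![d i], by simp [hc i], by
        simpa using ⟨hd i, (Finset.mem_filter.mp hi).2⟩, by simp⟩
    simpa [add_assoc] using Set.add_mem_add (Set.add_mem_add hv h2) h1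
  · -- RHS ⊆ P
    rintro x ⟨y, hy, c, hc, rfl⟩
    have hyP : y ∈ P := by
      rw [hP]
      obtain ⟨a, ha, b, hb, rfl⟩ := hy
      exact Set.add_mem_add ha (coneHull_mono Set.diff_subset hb)
    exact hCrec hc y hyP
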